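/- Weight ratios under elementary transitions: for every headway configuration ζ = (m, s) and every index i with m(i−1) ≥ 1, the weight ratios satisfy W(ζ₁ⁱ)/W(ζ) = x^(3 − 2·s i) · y^(θ_{i−1}^0 − θ_{i−1}^1 + θ_i^0), W(ζ₂ⁱ)/W(ζ) = y^(θ_{i−1}^0 − θ_{i−1}^1 + θ_i^0), and for every index i, W(ζ₃ⁱ)/W(ζ) = x^(3 − 2·s i). -/
import Mathlib


/-- Indicator that the gap ahead of particle `i` equals `r`. -/
noncomputable def theta {N : ℕ} (m : ZMod N → ℕ) (i : ZMod N) (r : ℕ) : ℝ :=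
  if m i = r then 1 else 0

/-- Unnormalized stationary weight `W(ζ) = ∏ i, x^(s i − 3/2) · y^(−θ_i^0)`. -/
noncomputable def Wgt {N : ℕ} [NeZero N] (x y : ℝ) (m s : ZMod N → ℕ) : ℝ :=
  ∏ i : ZMod N, x ^ ((s i : ℝ) - 3 / 2) * y ^ (-(theta m i 0))

/-- Hopping rate of a state-1 particle. -/
noncomputable def qrate {N : ℕ} (qs q01 : ℝ) (m s : ZMod N → ℕ) (i : ZMod N) : ℝ :=
  qs * (if s i = 1 then (1 : ℝ) else 0) * (1 + q01 * theta m i 1) * (1 - theta m i 0)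

/-- Hopping rate of a state-2 particle. -/
noncomputable def Qrate {N : ℕ} (Qs Q01 : ℝ) (m s : ZMod N → ℕ) (i : ZMod N) : ℝ :=
  Qs * (if s i = 2 then (1 : ℝ) else 0) * (1 + Q01 * theta m i 1) * (1 - theta m i 0)

/-- Pheromone evaporation rate of particle `i`. -/
noncomputable def frate {N : ℕ} (fs f1s fs1 f10s fs01 : ℝ) (m s : ZMod N → ℕ)
    (i : ZMod N) : ℝ :=
  fs * (if s i = 2 then (1 : ℝ) else 0) *
    (1 + f1s * theta m (i - 1) 0 + fs1 * theta m i 0 + f10s * theta m (i - 1) 1 +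
      fs01 * theta m i 1)

/-- Gap vector of the pre-jump configuration: `m (i−1)` decreased by one, `m i` increased. -/
def mjump {N : ℕ} (m : ZMod N → ℕ) (i : ZMod N) : ZMod N → ℕ :=
  fun j => if j = i - 1 then m (i - 1) - 1 else if j = i then m i + 1 else m j

/-- State vector with the state of particle `i` flipped (`1 ↔ 2`). -/
def sflip {N : ℕ} (s : ZMod N → ℕ) (i : ZMod N) : ZMod N → ℕ :=
  Function.update s i (3 - s i)

section Aux

variable {N : ℕ} [NeZero N]

lemma Wgt_eq (x y : ℝ) (hx : 0 < x) (hy : 0 < y) (m s : ZMod N → ℕ) :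
    Wgt x y m s = x ^ (∑ i : ZMod N, ((s i : ℝ) - 3 / 2))
      * y ^ (∑ i : ZMod N, -(theta m i 0)) := by
  rw [Wgt, Real.rpow_sum_of_pos hx, Real.rpow_sum_of_pos hy, ← Finset.prod_mul_distrib]

lemma ratio_aux {x y : ℝ} (hx : 0 < x) (hy : 0 < y) (a b c d : ℝ) :
    (x ^ a * y ^ b) / (x ^ c * y ^ d) = x ^ (a - c) * y ^ (b - d) := by
  rw [Real.rpow_sub hx, Real.rpow_sub hy]; ring

lemma Wgt_ratio (x y : ℝ) (hx : 0 < x) (hy : 0 < y) (m m' s s' : ZMod N → ℕ) :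
    Wgt x y m' s' / Wgt x y m s
      = x ^ (∑ i : ZMod N, (((s' i : ℝ) - 3 / 2) - ((s i : ℝ) - 3 / 2)))
        * y ^ (∑ i : ZMod N, (-(theta m' i 0) - -(theta m i 0))) := by
  rw [Wgt_eq x y hx hy, Wgt_eq x y hx hy, ratio_aux hx hy,
    ← Finset.sum_sub_distrib, ← Finset.sum_sub_distrib]

lemma sub_one_ne (hN : 3 ≤ N) (i : ZMod N) : i - 1 ≠ i := by
  intro h
  rw [sub_eq_self] at h
  have : ((1 : ℕ) : ZMod N) = 0 := by exact_mod_cast h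
  rw [ZMod.natCast_eq_zero_iff] at this
  have := Nat.le_of_dvd one_pos this
  omega

lemma sum_x_flip (s : ZMod N → ℕ) (hs : ∀ i, s i = 1 ∨ s i = 2) (i : ZMod N) :
    (∑ j : ZMod N, (((sflip s i j : ℝ) - 3 / 2) - ((s j : ℝ) - 3 / 2)))
      = 3 - 2 * (s i : ℝ) := by
  rw [Finset.sum_eq_single i]
  · rcases hs i with h | h <;> simp [sflip, h] <;> norm_num
  · intro j _ hj
    simp [sflip, Function.update_of_ne hj]
  · simp

lemma sum_y_jump (hN : 3 ≤ N) (m : ZMod N → ℕ) (i : ZMod N) (hm : 1 ≤ m (i - 1)) :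
    (∑ j : ZMod N, (-(theta (mjump m i) j 0) - -(theta m j 0)))
      = theta m (i - 1) 0 - theta m (i - 1) 1 + theta m i 0 := by
  have hne := sub_one_ne hN i
  rw [← Finset.sum_subset (Finset.subset_univ ({i - 1, i} : Finset (ZMod N)))
    (fun j _ hj => ?_)]
  · rw [Finset.sum_pair hne]
    have h1 : theta (mjump m i) (i - 1) 0 = theta m (i - 1) 1 := by
      simp only [theta, mjump, if_pos rfl]
      by_cases h : m (i - 1) = 1 <;> simp [h] <;> omega
    have h2 : theta (mjump m i) i 0 = 0 := by
      simp [theta, mjump, hne.symm]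
    rw [h1, h2]
    ring
  · simp only [Finset.mem_insert, Finset.mem_singleton, not_or] at hj
    simp [theta, mjump, hj.1, hj.2]

end Aux

/-- weight ratios under the elementary transitions
`ζ ↦ ζ₁ⁱ`, `ζ ↦ ζ₂ⁱ` (forward jumps, requiring `m (i−1) ≥ 1`) and
`ζ ↦ ζ₃ⁱ` (state flip). -/
theorem antTrail_weight_ratios
    (N : ℕ) [NeZero N] (hN : 3 ≤ N)
    (x y : ℝ) (hx : 0 < x) (hy : 0 < y)
    (m s : ZMod N → ℕ) (hs : ∀ i, s i = 1 ∨ s i = 2) :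
    (∀ i : ZMod N, 1 ≤ m (i - 1) →
        Wgt x y (mjump m i) (sflip s i) / Wgt x y m s
          = x ^ ((3 : ℝ) - 2 * (s i : ℝ))
            * y ^ (theta m (i - 1) 0 - theta m (i - 1) 1 + theta m i 0)
        ∧ Wgt x y (mjump m i) s / Wgt x y m s
          = y ^ (theta m (i - 1) 0 - theta m (i - 1) 1 + theta m i 0))
    ∧ ∀ i : ZMod N,
        Wgt x y m (sflip s i) / Wgt x y m s = x ^ ((3 : ℝ) - 2 * (s i : ℝ)) := by
  
  constructor
  · intro i hm
    constructor
    · rw [Wgt_ratio x y hx hy, sum_x_flip s hs i, sum_y_jump hN m i hm]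
    · rw [Wgt_ratio x y hx hy, sum_y_jump hN m i hm]
      simp
  · intro i
    rw [Wgt_ratio x y hx hy, sum_x_flip s hs i]
    simp
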